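/- Let n > 2 be an odd natural number. Then there exists a nonzero multivariate polynomial p in n complex variables such that for every v ∈ ℂ^n with p(v) ≠ 0, the family of 2n vectors {T^a v : a ∈ ℤ_n} ∪ {T^a D v : a ∈ ℤ_n} is a full spark frame (every subfamily of n of these vectors is linearly independent). In particular, the set of such v contains a nonempty Zariski open subset of ℂ^n. -/

import Mathlib

/-- The `n × n` cyclic shift matrix `T`, acting by `(T v) j = v ((j - 1) mod n)`. -/
def shiftMat (n : ℕ) : Matrix (Fin n) (Fin n) ℂ :=
  Matrix.of fun j k => if ((k : ℕ) + 1) % n = (j : ℕ) then 1 else 0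

/-- The `n × n` reversal matrix `D`, acting by `(D v) j = v ((n - j) mod n)`. -/
def revMat (n : ℕ) : Matrix (Fin n) (Fin n) ℂ :=
  Matrix.of fun j k => if ((j : ℕ) + (k : ℕ)) % n = 0 then 1 else 0

/-- The family of `2n` vectors `{T^a v} ∪ {T^a D v}`, the `D₂ₙ`-orbit of `v`. -/
noncomputable def dihedralOrbit (n : ℕ) (v : Fin n → ℂ) :
    Fin 2 × Fin n → Fin n → ℂ :=
  fun p => ((shiftMat n) ^ (p.2 : ℕ)).mulVec (if p.1 = 0 then v else (revMat n).mulVec v)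

/-- A family of `2n` vectors in `ℂⁿ` is a full spark frame (has the Haar property)
if every subfamily of `n` of the vectors is linearly independent. -/
def IsFullSpark (n : ℕ) (f : Fin 2 × Fin n → Fin n → ℂ) : Prop :=
  ∀ S : Finset (Fin 2 × Fin n), S.card = n →
    LinearIndependent ℂ (fun i : {x // x ∈ S} => f i.1)

/-!
In the eigenbasis `(ζ ^ (j k))ⱼ` of the shift, `T^a` multiplies the `k`-th coordinate by
`ζ ^ (-a k)` and `D` sends coordinate `k` to `-k`. Given `m` rotations and `n - m` reflections
with `2 m < n` (for odd `n`, replacing `v` by `D v` swaps the two kinds), choose Fourier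
coefficients `0` on `-{1, …, m}` and `1` elsewhere. On the coordinates `{1, …, m}` the reflected
vectors vanish and the rotated ones form an invertible Vandermonde block; on the remaining
coordinates `{m + 1, …, n}` the reflected ones do. So every choice of `n` orbit vectors is
independent for some `v`, i.e. each of the finitely many determinant polynomials is nonzero, and
their product is the required `p`.
-/

open Function Matrix

section LinearAlgebra

variable {R K M N ι κ : Type*}

theorem LinearIndependent.sum_elim_of_map_eq_zero [Ring R] [AddCommGroup M] [AddCommGroup N]
    [Module R M] [Module R N] {f : ι → M} {g : κ → M} (π : M →ₗ[R] N)
    (hf : LinearIndependent R (π ∘ f)) (hg : LinearIndependent R g) (hπg : ∀ j, π (g j) = 0) :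
    LinearIndependent R (Sum.elim f g) :=
  (hf.of_comp π).sum_type hg <| (Submodule.range_ker_disjoint hf).mono_right <|
    Submodule.span_le.mpr <| Set.range_subset_iff.mpr hπg

theorem linearIndependent_pow_add [Field K] [Fintype ι] {L : ℕ} (hL : Fintype.card ι = L)
    {z : ι → K} (hz : Injective z) (hz0 : ∀ i, z i ≠ 0) (c : ℕ) :
    LinearIndependent K fun i (j : Fin L) => z i ^ (c + j) := by
  let e := Fintype.equivFinOfCardEq hL
  have hV : LinearIndependent K (vandermonde (z ∘ e.symm)).row :=
    linearIndependent_rows_iff_isUnit.mpr <| (isUnit_iff_isUnit_det _).mpr <|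
      isUnit_iff_ne_zero.mpr <| det_vandermonde_ne_zero_iff.mpr (hz.comp e.symm.injective)
  have hpow : LinearIndependent K fun i (j : Fin L) => z i ^ (j : ℕ) := by
    convert (linearIndependent_equiv e).mpr hV
    simp [vandermonde_apply]
  convert hpow.units_smul fun i => Units.mk0 (z i ^ c) (pow_ne_zero c (hz0 i))
  simp [pow_add, Units.smul_def]

noncomputable def mulVecDetPoly {m : Type*} [Fintype m] [DecidableEq m] [CommRing R]
    (M : m → Matrix m m R) : MvPolynomial m R :=
  (Matrix.of fun i => (M i).map MvPolynomial.C *ᵥ MvPolynomial.X).det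

theorem linearIndependent_mulVec_iff_eval_mulVecDetPoly_ne_zero {m : Type*} [Fintype m]
    [DecidableEq m] [Field K] (M : m → Matrix m m K) (v : m → K) :
    LinearIndependent K (fun i => M i *ᵥ v) ↔ MvPolynomial.eval v (mulVecDetPoly M) ≠ 0 := by
  have heval : MvPolynomial.eval v (mulVecDetPoly M) = (Matrix.of fun i => M i *ᵥ v).det := by
    rw [mulVecDetPoly, RingHom.map_det]
    congr 1
    ext i j
    simp [Matrix.mulVec, dotProduct]
  rw [heval, ← isUnit_iff_ne_zero, ← isUnit_iff_isUnit_det, ← linearIndependent_rows_iff_isUnit]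
  rfl

end LinearAlgebra

theorem isFullSpark_of_forall_embedding {n : ℕ} {f : Fin 2 × Fin n → Fin n → ℂ}
    (h : ∀ r : Fin n ↪ Fin 2 × Fin n, LinearIndependent ℂ (f ∘ r)) : IsFullSpark n f := by
  intro S hS
  let e := (S.equivFinOfCardEq hS).symm
  exact (linearIndependent_equiv e).mp (h (e.toEmbedding.trans (Embedding.subtype _)))

open Fin.CommRing

section Dihedral

variable {n : ℕ} [NeZero n]

theorem shiftMat_mulVec (w : Fin n → ℂ) (j : Fin n) : (shiftMat n *ᵥ w) j = w (j - 1) := by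
  have hcond : ∀ k : Fin n, ((k : ℕ) + 1) % n = j ↔ k = j - 1 := fun k => by
    rw [eq_sub_iff_add_eq, Fin.ext_iff, Fin.val_add, Fin.val_one', Nat.add_mod_mod]
  simp [shiftMat, mulVec, dotProduct, hcond]

theorem shiftMat_pow_mulVec (a : ℕ) (w : Fin n → ℂ) (j : Fin n) :
    (shiftMat n ^ a *ᵥ w) j = w (j - a) := by
  induction a generalizing w j with
  | zero => simp
  | succ a ih =>
    rw [pow_succ, ← mulVec_mulVec, ih, shiftMat_mulVec, sub_sub, Nat.cast_succ]

theorem revMat_mulVec (w : Fin n → ℂ) (j : Fin n) : (revMat n *ᵥ w) j = w (-j) := by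
  have hcond : ∀ k : Fin n, ((j : ℕ) + k) % n = 0 ↔ k = -j := fun k => by
    rw [eq_neg_iff_add_eq_zero, add_comm, Fin.ext_iff, Fin.val_add, Fin.val_zero]
  simp [revMat, mulVec, dotProduct, hcond]

noncomputable def dihedralMat (n : ℕ) (p : Fin 2 × Fin n) : Matrix (Fin n) (Fin n) ℂ :=
  shiftMat n ^ (p.2 : ℕ) * if p.1 = 0 then 1 else revMat n

omit [NeZero n] in
theorem dihedralOrbit_eq_mulVec (v : Fin n → ℂ) (p : Fin 2 × Fin n) :
    dihedralOrbit n v p = dihedralMat n p *ᵥ v := by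
  rw [dihedralOrbit, dihedralMat, ← mulVec_mulVec]
  split_ifs <;> simp

end Dihedral

section Fourier

variable {n : ℕ} {ζ : ℂ}

def rootChar (ζ : ℂ) (x : Fin n) : ℂ := ζ ^ (x : ℕ)

theorem rootChar_add (hζ : ζ ^ n = 1) (x y : Fin n) :
    rootChar ζ (x + y) = rootChar ζ x * rootChar ζ y := by
  rw [rootChar, rootChar, rootChar, Fin.val_add, ← pow_eq_pow_mod _ hζ, pow_add]

theorem rootChar_mul (hζ : ζ ^ n = 1) (x y : Fin n) :
    rootChar ζ (x * y) = rootChar ζ x ^ (y : ℕ) := by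
  rw [rootChar, rootChar, Fin.val_mul, ← pow_eq_pow_mod _ hζ, pow_mul]

theorem rootChar_ne_zero [NeZero n] (hζ : ζ ^ n = 1) (x : Fin n) : rootChar ζ x ≠ 0 :=
  pow_ne_zero _ (ne_zero_pow (NeZero.ne n) (hζ ▸ one_ne_zero))

theorem rootChar_injective (hζ : IsPrimitiveRoot ζ n) : Injective (rootChar (n := n) ζ) :=
  fun x y h => Fin.ext (hζ.pow_inj x.isLt y.isLt h)

theorem rootChar_mul_natCast [NeZero n] (hζ : ζ ^ n = 1) (x : Fin n) (N : ℕ) :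
    rootChar ζ (x * (N : Fin n)) = rootChar ζ x ^ N := by
  rw [mul_comm, rootChar_mul hζ, rootChar, rootChar, Fin.val_natCast, ← pow_eq_pow_mod _ hζ,
    ← pow_mul, ← pow_mul, mul_comm]

/-- The orbit of `vandermonde (rootChar ζ) *ᵥ u` in the Fourier coordinates `u`, where `T` acts
diagonally and `D` by `k ↦ -k`. -/
def fourierOrbit (ζ : ℂ) (u : Fin n → ℂ) (p : Fin 2 × Fin n) (k : Fin n) : ℂ :=
  rootChar ζ (-(p.2 * k)) * if p.1 = 0 then u k else u (-k)

theorem fourierOrbit_natCast [NeZero n] (hζ : ζ ^ n = 1) (u : Fin n → ℂ) (p : Fin 2 × Fin n)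
    (N : ℕ) :
    fourierOrbit ζ u p N = rootChar ζ (-p.2) ^ N * if p.1 = 0 then u N else u (-(N : Fin n)) := by
  rw [fourierOrbit, ← neg_mul, rootChar_mul_natCast hζ]

theorem fourierOrbit_comp_neg (u : Fin n → ℂ) (p : Fin 2 × Fin n) :
    fourierOrbit ζ (fun k => u (-k)) p = fourierOrbit ζ u (p.1 + 1, p.2) := by
  obtain ⟨ε, a⟩ := p
  funext k
  fin_cases ε <;> simp [fourierOrbit]

variable [NeZero n]

theorem shiftMat_pow_mulVec_vandermonde (hζ : ζ ^ n = 1) (a : ℕ) (u : Fin n → ℂ) :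
    shiftMat n ^ a *ᵥ (vandermonde (rootChar ζ) *ᵥ u)
      = vandermonde (rootChar ζ) *ᵥ fun k => rootChar ζ (-((a : Fin n) * k)) * u k := by
  funext j
  rw [shiftMat_pow_mulVec]
  simp only [mulVec, dotProduct, vandermonde_apply, ← rootChar_mul hζ]
  refine Finset.sum_congr rfl fun k _ => ?_
  rw [sub_mul, sub_eq_add_neg, rootChar_add hζ, mul_assoc]

theorem revMat_mulVec_vandermonde (hζ : ζ ^ n = 1) (u : Fin n → ℂ) :
    revMat n *ᵥ (vandermonde (rootChar ζ) *ᵥ u) = vandermonde (rootChar ζ) *ᵥ fun k => u (-k) := by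
  funext j
  rw [revMat_mulVec]
  simp only [mulVec, dotProduct, vandermonde_apply, ← rootChar_mul hζ]
  exact Fintype.sum_equiv (Equiv.neg _) _ _ fun k => by simp

theorem dihedralOrbit_vandermonde_mulVec (hζ : ζ ^ n = 1) (u : Fin n → ℂ) (p : Fin 2 × Fin n) :
    dihedralOrbit n (vandermonde (rootChar ζ) *ᵥ u) p
      = vandermonde (rootChar ζ) *ᵥ fourierOrbit ζ u p := by
  by_cases hp : p.1 = 0
  · simp only [dihedralOrbit, hp, if_true, shiftMat_pow_mulVec_vandermonde hζ,
      Fin.cast_val_eq_self]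
    congr 1 with k
    simp [fourierOrbit, hp]
  · simp only [dihedralOrbit, hp, if_false, revMat_mulVec_vandermonde hζ,
      shiftMat_pow_mulVec_vandermonde hζ, Fin.cast_val_eq_self]
    congr 1 with k
    simp [fourierOrbit, hp]

end Fourier

section Core

variable {n : ℕ} [NeZero n] {ζ : ℂ}

/-- Vanishing on `-{1, …, m}`, these Fourier coefficients make the reflected vectors vanish on the
coordinates `{1, …, m}`, where the `m` rotated ones form a Vandermonde system. -/
def gapVec (n m : ℕ) (k : Fin n) : ℂ := if n - m ≤ (k : ℕ) then 0 else 1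

theorem gapVec_natCast {m N : ℕ} (hN : N < n) :
    gapVec n m (N : Fin n) = if n - m ≤ N then 0 else 1 := by
  rw [gapVec, Fin.val_cast_of_lt hN]

theorem Fin.neg_natCast_eq_natCast_sub {N : ℕ} (hN : N ≤ n) :
    -(N : Fin n) = ((n - N : ℕ) : Fin n) := by
  rw [Nat.cast_sub hN, Fin.natCast_self, zero_sub]

omit [NeZero n] in
theorem injective_rootChar_neg_snd (hζ : IsPrimitiveRoot ζ n) {ι : Type*}
    {f : ι → Fin 2 × Fin n} (hf : Injective f) {p : ι → Prop}
    (hp : ∀ i j, p i → p j → (f i).1 = (f j).1) :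
    Injective fun i : {i // p i} => rootChar ζ (-(f i).2) := fun i j h =>
  Subtype.ext <| hf <| Prod.ext (hp _ _ i.2 j.2) (neg_injective (rootChar_injective hζ h))

theorem linearIndependent_fourierOrbit_gapVec (hζ : IsPrimitiveRoot ζ n) {ι : Type*}
    [Fintype ι] {f : ι → Fin 2 × Fin n} (hf : Injective f) (hcard : Fintype.card ι = n)
    (hm : 2 * Fintype.card {i // (f i).1 = 0} < n) :
    LinearIndependent ℂ fun i =>
      fourierOrbit ζ (gapVec n (Fintype.card {i // (f i).1 = 0})) (f i) := by
  set m := Fintype.card {i // (f i).1 = 0}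
  have hζ1 := hζ.pow_eq_one
  have hsplit :
      (fun i => fourierOrbit ζ (gapVec n m) (f i)) ∘ Equiv.sumCompl (fun i => (f i).1 = 0)
        = Sum.elim (fun i : {i // (f i).1 = 0} => fourierOrbit ζ (gapVec n m) (f i))
            (fun i : {i // ¬(f i).1 = 0} => fourierOrbit ζ (gapVec n m) (f i)) := by
    ext (i | i) <;> rfl
  rw [← linearIndependent_equiv (Equiv.sumCompl fun i => (f i).1 = 0), hsplit]
  refine .sum_elim_of_map_eq_zero (LinearMap.funLeft ℂ ℂ fun j : Fin m => ((1 + j : ℕ) : Fin n))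
    ?rotations ?reflections ?vanish
  case rotations =>
    have hrow (i : {i // (f i).1 = 0}) (j : Fin m) : fourierOrbit ζ (gapVec n m) (f i)
        ((1 + j : ℕ) : Fin n) = rootChar ζ (-(f i).2) ^ (1 + (j : ℕ)) := by
      rw [fourierOrbit_natCast hζ1, if_pos i.2, gapVec_natCast (by omega), if_neg (by omega),
        mul_one]
    show LinearIndependent ℂ fun (i : {i // (f i).1 = 0}) (j : Fin m) =>
      fourierOrbit ζ (gapVec n m) (f i) ((1 + j : ℕ) : Fin n)
    simpa only [hrow] using linearIndependent_pow_add rfl (injective_rootChar_neg_snd hζ hf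
        fun i j (hi : (f i).1 = 0) hj => hi.trans hj.symm) (fun i => rootChar_ne_zero hζ1 _) 1
  case reflections =>
    have hrow (i : {i // ¬(f i).1 = 0}) (j : Fin (n - m)) : fourierOrbit ζ (gapVec n m) (f i)
        ((m + 1 + j : ℕ) : Fin n) = rootChar ζ (-(f i).2) ^ (m + 1 + (j : ℕ)) := by
      rw [fourierOrbit_natCast hζ1, if_neg i.2, Fin.neg_natCast_eq_natCast_sub (by omega),
        gapVec_natCast (by omega), if_neg (by omega), mul_one]
    have hcompl : Fintype.card {i // ¬(f i).1 = 0} = n - m := by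
      rw [Fintype.card_subtype_compl, hcard]
    refine .of_comp (LinearMap.funLeft ℂ ℂ fun j : Fin (n - m) => ((m + 1 + j : ℕ) : Fin n)) ?_
    show LinearIndependent ℂ fun (i : {i // ¬(f i).1 = 0}) (j : Fin (n - m)) =>
      fourierOrbit ζ (gapVec n m) (f i) ((m + 1 + j : ℕ) : Fin n)
    simpa only [hrow] using
      linearIndependent_pow_add hcompl (injective_rootChar_neg_snd hζ hf fun i j hi hj =>
        (Fin.eq_one_of_ne_zero _ hi).trans (Fin.eq_one_of_ne_zero _ hj).symm)
        (fun i => rootChar_ne_zero hζ1 _) (m + 1)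
  case vanish =>
    intro i
    funext j
    rw [LinearMap.funLeft_apply, fourierOrbit_natCast hζ1, if_neg i.2,
      Fin.neg_natCast_eq_natCast_sub (by omega), gapVec_natCast (by omega), if_pos (by omega),
      mul_zero, Pi.zero_apply]

theorem exists_linearIndependent_fourierOrbit (hodd : Odd n) (hζ : IsPrimitiveRoot ζ n)
    {ι : Type*} [Fintype ι] {f : ι → Fin 2 × Fin n} (hf : Injective f)
    (hcard : Fintype.card ι = n) :
    ∃ u, LinearIndependent ℂ fun i => fourierOrbit ζ u (f i) := by
  by_cases hm : 2 * Fintype.card {i // (f i).1 = 0} < n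
  · exact ⟨_, linearIndependent_fourierOrbit_gapVec hζ hf hcard hm⟩
  let g i : Fin 2 × Fin n := ((f i).1 + 1, (f i).2)
  have hg : Injective g := fun i j h =>
    hf (Prod.ext (add_right_cancel (Prod.ext_iff.mp h).1) (Prod.ext_iff.mp h).2)
  have hgm : 2 * Fintype.card {i // (g i).1 = 0} < n := by
    have hswap : ∀ a : Fin 2, a + 1 = 0 ↔ ¬a = 0 := by decide
    rw [Fintype.card_congr (Equiv.subtypeEquivRight fun i => hswap (f i).1),
      Fintype.card_subtype_compl, hcard]
    obtain ⟨k, rfl⟩ := hodd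
    omega
  refine ⟨fun k => gapVec n (Fintype.card {i // (g i).1 = 0}) (-k), ?_⟩
  simpa only [fourierOrbit_comp_neg] using linearIndependent_fourierOrbit_gapVec hζ hg hcard hgm

end Core

theorem exists_linearIndependent_dihedralOrbit {n : ℕ} (hodd : Odd n) {ι : Type*} [Fintype ι]
    {f : ι → Fin 2 × Fin n} (hf : Injective f) (hcard : Fintype.card ι = n) :
    ∃ v, LinearIndependent ℂ fun i => dihedralOrbit n v (f i) := by
  have : NeZero n := ⟨hodd.pos.ne'⟩
  obtain ⟨ζ, hζ⟩ : ∃ ζ : ℂ, IsPrimitiveRoot ζ n :=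
    ⟨_, Complex.isPrimitiveRoot_exp n (NeZero.ne n)⟩
  have hF : Injective (vandermonde (rootChar ζ)).mulVecLin :=
    mulVec_injective_iff_isUnit.mpr <| (isUnit_iff_isUnit_det _).mpr <| isUnit_iff_ne_zero.mpr <|
      det_vandermonde_ne_zero_iff.mpr (rootChar_injective hζ)
  obtain ⟨u, hu⟩ := exists_linearIndependent_fourierOrbit hodd hζ hf hcard
  refine ⟨vandermonde (rootChar ζ) *ᵥ u, ?_⟩
  simpa only [dihedralOrbit_vandermonde_mulVec hζ.pow_eq_one, Function.comp_def,
    coe_mulVecLin] using hu.map' _ (LinearMap.ker_eq_bot.mpr hF)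

theorem exists_nonzero_polynomial_dihedral_full_spark_general
    (n : ℕ) (hodd : Odd n) :
    ∃ p : MvPolynomial (Fin n) ℂ, p ≠ 0 ∧
      ∀ v : Fin n → ℂ, MvPolynomial.eval v p ≠ 0 →
        IsFullSpark n (dihedralOrbit n v) := by
  refine ⟨∏ r : Fin n ↪ Fin 2 × Fin n, mulVecDetPoly fun i => dihedralMat n (r i), ?_, ?_⟩
  · refine Finset.prod_ne_zero_iff.mpr fun r _ hr => ?_
    obtain ⟨v, hv⟩ := exists_linearIndependent_dihedralOrbit hodd r.injective (Fintype.card_fin n)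
    simp only [dihedralOrbit_eq_mulVec,
      linearIndependent_mulVec_iff_eval_mulVecDetPoly_ne_zero] at hv
    exact hv (by rw [hr, map_zero])
  · intro v hv
    rw [map_prod, Finset.prod_ne_zero_iff] at hv
    refine isFullSpark_of_forall_embedding fun r => ?_
    simpa only [Function.comp_def, dihedralOrbit_eq_mulVec] using
      (linearIndependent_mulVec_iff_eval_mulVecDetPoly_ne_zero _ v).mpr (hv r (Finset.mem_univ r))

theorem exists_nonzero_polynomial_dihedral_full_spark
    (n : ℕ) (hn : 2 < n) (hodd : Odd n) :
    ∃ p : MvPolynomial (Fin n) ℂ, p ≠ 0 ∧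
      ∀ v : Fin n → ℂ, MvPolynomial.eval v p ≠ 0 →
        IsFullSpark n (dihedralOrbit n v) :=
  exists_nonzero_polynomial_dihedral_full_spark_general n hodd
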